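/- arXiv:1512.00918 — 2 statements merged into one kernel-verified Lean document; each statement's English description precedes it below -/
import Mathlib

section
/- Suppose x ≥ 2 and k is a positive integer with x^k < q. Then for any real number t and any complex numbers a(p) indexed by primes p, one has ∑_{χ mod q} |∑_{p ≤ x} χ(p) a(p) / p^{1/2 + it}|^{2k} ≤ φ(q) · k! · (∑_{p ≤ x} |a(p)|²/p)^k, where the outer sum runs over all Dirichlet characters modulo q and the inner sums run over primes p ≤ x. -/
/-!
Write `f p = a p / p ^ (1/2 + it)`. Expanding the `k`-th power,
`(∑ p, χ p * f p) ^ k = ∑ b, χ b * c b`, where `c b` sums `f p₁ ⋯ f pₖ` over the tuples of primes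
`pᵢ ≤ x` with `p₁ ⋯ pₖ ≡ b (mod q)`. Orthogonality of characters turns the `2k`-th moment into
`φ(q) ∑_b ‖c b‖²`. Every product `p₁ ⋯ pₖ` is at most `x ^ k < q`, so a residue class contains at most
one of them, and by unique factorisation at most `k!` tuples; Cauchy–Schwarz then gives
`‖c b‖² ≤ k! ∑ ‖f p₁ ⋯ f pₖ‖²`, and summing over `b` yields `k! (∑_p ‖f p‖²) ^ k`.
-/

open Finset ComplexConjugate

lemma exists_perm_eq_comp_of_perm_ofFn {α : Type*} [LinearOrder α] {k : ℕ} {τ σ : Fin k → α}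
    (h : (List.ofFn σ).Perm (List.ofFn τ)) : ∃ π : Equiv.Perm (Fin k), σ = τ ∘ π := by
  have hsorted : τ ∘ Tuple.sort τ = σ ∘ Tuple.sort σ :=
    List.ofFn_injective <| List.Perm.eq_of_sortedLE (Tuple.monotone_sort τ).sortedLE_ofFn
      (Tuple.monotone_sort σ).sortedLE_ofFn
      (((Tuple.sort τ).ofFn_comp_perm τ).trans
        (h.symm.trans ((Tuple.sort σ).ofFn_comp_perm σ).symm))
  refine ⟨Tuple.sort τ * (Tuple.sort σ)⁻¹, funext fun i => ?_⟩
  simpa using (congrFun hsorted ((Tuple.sort σ)⁻¹ i)).symm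

lemma exists_perm_eq_comp_of_prod_eq {k : ℕ} {τ σ : Fin k → ℕ}
    (hτ : ∀ i, (τ i).Prime) (hσ : ∀ i, (σ i).Prime) (h : ∏ i, σ i = ∏ i, τ i) :
    ∃ π : Equiv.Perm (Fin k), σ = τ ∘ π := by
  have hfactors {ρ : Fin k → ℕ} (hρ : ∀ i, (ρ i).Prime) :
      (List.ofFn ρ).Perm (∏ i, ρ i).primeFactorsList :=
    Nat.primeFactorsList_unique List.prod_ofFn (by simpa [List.mem_ofFn] using hρ)
  exact exists_perm_eq_comp_of_perm_ofFn <| (hfactors hσ).trans (h ▸ (hfactors hτ).symm)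

lemma card_le_factorial_of_prod_eq {k n : ℕ} (s : Finset (Fin k → ℕ))
    (hs : ∀ τ ∈ s, (∀ i, (τ i).Prime) ∧ ∏ i, τ i = n) : #s ≤ k.factorial := by
  obtain rfl | ⟨τ, hτ⟩ := s.eq_empty_or_nonempty
  · simp
  have hsub : s ⊆ univ.image fun π : Equiv.Perm (Fin k) => τ ∘ π := by
    intro σ hσ
    obtain ⟨π, rfl⟩ := exists_perm_eq_comp_of_prod_eq (hs τ hτ).1 (hs σ hσ).1
      ((hs σ hσ).2.trans (hs τ hτ).2.symm)
    exact mem_image_of_mem _ (mem_univ π)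
  calc #s ≤ #(univ : Finset (Equiv.Perm (Fin k))) := (card_le_card hsub).trans card_image_le
    _ = k.factorial := by rw [card_univ, Fintype.card_perm, Fintype.card_fin]

lemma norm_sum_sq_le_card_mul {ι : Type*} (s : Finset ι) (g : ι → ℂ) :
    ‖∑ i ∈ s, g i‖ ^ 2 ≤ #s * ∑ i ∈ s, ‖g i‖ ^ 2 :=
  (pow_le_pow_left₀ (norm_nonneg _) (norm_sum_le s g) 2).trans (sq_sum_le_card_mul_sum_sq ..)

namespace DirichletCharacter

variable {q : ℕ} [NeZero q]

lemma sum_apply_mul_conj_apply (a b : ZMod q) :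
    ∑ χ : DirichletCharacter ℂ q, χ a * conj (χ b) =
      if a = b ∧ IsUnit b then (q.totient : ℂ) else 0 := by
  by_cases hb : IsUnit b
  · obtain ⟨u, rfl⟩ := hb
    have hconj (χ : DirichletCharacter ℂ q) : χ a * conj (χ u) = χ (u : ZMod q)⁻¹ * χ a := by
      rw [← RCLike.star_def, MulChar.star_apply', MulChar.inv_apply, Ring.inverse_unit,
        ZMod.inv_coe_unit, mul_comm]
    simp only [hconj, sum_char_inv_mul_char_eq ℂ u.isUnit, eq_comm, u.isUnit, and_true]
  · simp [MulChar.map_nonunit _ hb, hb]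

theorem sum_norm_sq_sum_mul_eq (c : ZMod q → ℂ) :
    ∑ χ : DirichletCharacter ℂ q, ‖∑ a, χ a * c a‖ ^ 2 =
      q.totient * ∑ a with IsUnit a, ‖c a‖ ^ 2 := by
  have hexpand (χ : DirichletCharacter ℂ q) :
      ((‖∑ a, χ a * c a‖ ^ 2 : ℝ) : ℂ) = ∑ a, ∑ b, c a * conj (c b) * (χ a * conj (χ b)) := by
    rw [Complex.ofReal_pow, ← Complex.mul_conj', map_sum, sum_mul_sum]
    exact sum_congr rfl fun a _ => sum_congr rfl fun b _ => by rw [map_mul]; ring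
  apply Complex.ofReal_injective
  calc ((∑ χ : DirichletCharacter ℂ q, ‖∑ a, χ a * c a‖ ^ 2 : ℝ) : ℂ)
      = ∑ a, ∑ b, c a * conj (c b) * ∑ χ : DirichletCharacter ℂ q, χ a * conj (χ b) := by
        simp only [Complex.ofReal_sum, hexpand, mul_sum]
        rw [sum_comm]
        exact sum_congr rfl fun a _ => sum_comm
    _ = _ := by
        simp only [sum_apply_mul_conj_apply, mul_ite, mul_zero, ite_and, sum_ite_eq,
          Complex.mul_conj', mem_univ, if_true]
        push_cast
        rw [mul_sum, sum_filter]
        exact sum_congr rfl fun a _ => by split_ifs <;> ring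

end DirichletCharacter

section PrimeTuples

variable {q : ℕ} (P : Finset ℕ) (f : ℕ → ℂ) (k : ℕ)

def powCoeff (a : ZMod q) : ℂ :=
  ∑ τ ∈ Fintype.piFinset (fun _ : Fin k => P) with ((∏ i, τ i : ℕ) : ZMod q) = a, ∏ i, f (τ i)

lemma sum_mul_pow_eq_sum_mul_powCoeff [NeZero q] (χ : DirichletCharacter ℂ q) :
    (∑ p ∈ P, χ p * f p) ^ k = ∑ a, χ a * powCoeff P f k a := by
  simp only [powCoeff, mul_sum]
  rw [sum_pow', ← sum_fiberwise _ fun τ : Fin k → ℕ => ((∏ i, τ i : ℕ) : ZMod q)]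
  refine sum_congr rfl fun a _ => sum_congr rfl fun τ hτ => ?_
  rw [(mem_filter.mp hτ).2.symm, prod_mul_distrib, Nat.cast_prod, map_prod]

lemma norm_powCoeff_sq_le (hP : ∀ p ∈ P, p.Prime)
    (hlt : ∀ τ ∈ Fintype.piFinset (fun _ : Fin k => P), ∏ i, τ i < q) (a : ZMod q) :
    ‖powCoeff P f k a‖ ^ 2 ≤ k.factorial *
      ∑ τ ∈ Fintype.piFinset (fun _ : Fin k => P) with ((∏ i, τ i : ℕ) : ZMod q) = a,
        ‖∏ i, f (τ i)‖ ^ 2 := by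
  refine (norm_sum_sq_le_card_mul _ _).trans (mul_le_mul_of_nonneg_right ?_ (by positivity))
  have hfiber := card_le_factorial_of_prod_eq (n := a.val)
    ({τ ∈ Fintype.piFinset (fun _ : Fin k => P) | ((∏ i, τ i : ℕ) : ZMod q) = a}) fun τ hτ => by
      obtain ⟨hτP, rfl⟩ := mem_filter.mp hτ
      exact ⟨fun i => hP _ (Fintype.mem_piFinset.mp hτP i),
        (ZMod.val_natCast_of_lt (hlt τ hτP)).symm⟩
  exact_mod_cast hfiber

theorem sum_norm_sum_mul_pow_le [NeZero q] (hP : ∀ p ∈ P, p.Prime)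
    (hlt : ∀ τ ∈ Fintype.piFinset (fun _ : Fin k => P), ∏ i, τ i < q) :
    ∑ χ : DirichletCharacter ℂ q, ‖∑ p ∈ P, χ p * f p‖ ^ (2 * k) ≤
      q.totient * k.factorial * (∑ p ∈ P, ‖f p‖ ^ 2) ^ k := by
  calc ∑ χ : DirichletCharacter ℂ q, ‖∑ p ∈ P, χ p * f p‖ ^ (2 * k)
      = ∑ χ : DirichletCharacter ℂ q, ‖∑ a, χ a * powCoeff P f k a‖ ^ 2 := by
        refine sum_congr rfl fun χ _ => ?_
        rw [pow_mul', ← norm_pow, sum_mul_pow_eq_sum_mul_powCoeff]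
    _ = q.totient * ∑ a with IsUnit a, ‖powCoeff P f k a‖ ^ 2 :=
        DirichletCharacter.sum_norm_sq_sum_mul_eq _
    _ ≤ q.totient * ∑ a, ‖powCoeff P f k a‖ ^ 2 := by
        gcongr
        exact filter_subset _ _
    _ ≤ q.totient * ∑ a : ZMod q, k.factorial *
          ∑ τ ∈ Fintype.piFinset (fun _ : Fin k => P) with ((∏ i, τ i : ℕ) : ZMod q) = a,
            ‖∏ i, f (τ i)‖ ^ 2 := by
        gcongr with a _
        exact norm_powCoeff_sq_le P f k hP hlt a
    _ = q.totient * k.factorial * (∑ p ∈ P, ‖f p‖ ^ 2) ^ k := by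
        rw [← mul_sum, sum_fiberwise, sum_pow', mul_assoc]
        simp only [norm_prod, prod_pow]

end PrimeTuples

lemma norm_natCast_cpow_half_add_mul_I_sq {n : ℕ} (hn : 0 < n) (t : ℝ) :
    ‖(n : ℂ) ^ ((1 / 2 : ℂ) + t * Complex.I)‖ ^ 2 = n := by
  rw [Complex.norm_natCast_cpow_of_pos hn]
  simpa using Real.rpow_inv_natCast_pow (n.cast_nonneg : (0 : ℝ) ≤ n) two_ne_zero

theorem character_moment_prime_sums_general (q : ℕ) [NeZero q] (x : ℝ)
    (k : ℕ) (hxk : x ^ k < (q : ℝ)) (t : ℝ) (a : ℕ → ℂ) :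
    ∑ χ : DirichletCharacter ℂ q,
        ‖∑ p ∈ (Finset.Iic ⌊x⌋₊).filter Nat.Prime,
            χ ((p : ℕ) : ZMod q) * a p /
              (p : ℂ) ^ ((1 / 2 : ℂ) + (t : ℂ) * Complex.I)‖ ^ (2 * k)
      ≤ (q.totient : ℝ) * (k.factorial : ℝ) *
          (∑ p ∈ (Finset.Iic ⌊x⌋₊).filter Nat.Prime,
            ‖a p‖ ^ 2 / (p : ℝ)) ^ k := by
  set P := (Iic ⌊x⌋₊).filter Nat.Prime
  have hP (p : ℕ) (hp : p ∈ P) : p.Prime := (mem_filter.mp hp).2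
  have hPx (p : ℕ) (hp : p ∈ P) : (p : ℝ) ≤ x :=
    (Nat.le_floor_iff' (hP p hp).ne_zero).mp (mem_Iic.mp (mem_filter.mp hp).1)
  have hlt (τ : Fin k → ℕ) (hτ : τ ∈ Fintype.piFinset fun _ => P) : ∏ i, τ i < q := by
    have hτx : ((∏ i, τ i : ℕ) : ℝ) ≤ x ^ k := by
      push_cast
      simpa using prod_le_prod (s := univ) (fun i _ => Nat.cast_nonneg (τ i))
        fun i _ => hPx _ (Fintype.mem_piFinset.mp hτ i)
    exact_mod_cast hτx.trans_lt hxk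
  simp_rw [mul_div_assoc]
  refine (sum_norm_sum_mul_pow_le P _ k hP hlt).trans_eq ?_
  congr 2
  refine sum_congr rfl fun p hp => ?_
  rw [norm_div, div_pow, norm_natCast_cpow_half_add_mul_I_sq (hP p hp).pos]

/-- **Lemma 2.7, first part** (a `q`-analogue of Soundararajan's Lemma 3).
For `x ≥ 2` and a positive integer `k` with `x^k < q`, any real `t` and any complex
coefficients `a(p)`,
`∑_{χ mod q} |∑_{p ≤ x} χ(p)a(p)/p^{1/2+it}|^{2k} ≤ φ(q) k! (∑_{p ≤ x} |a(p)|²/p)^k`. -/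
theorem character_moment_prime_sums (q : ℕ) [NeZero q] (x : ℝ) (hx : 2 ≤ x)
    (k : ℕ) (hk : 1 ≤ k) (hxk : x ^ k < (q : ℝ)) (t : ℝ) (a : ℕ → ℂ) :
    ∑ χ : DirichletCharacter ℂ q,
        ‖∑ p ∈ (Finset.Iic ⌊x⌋₊).filter Nat.Prime,
            χ ((p : ℕ) : ZMod q) * a p /
              (p : ℂ) ^ ((1 / 2 : ℂ) + (t : ℂ) * Complex.I)‖ ^ (2 * k)
      ≤ (q.totient : ℝ) * (k.factorial : ℝ) *
          (∑ p ∈ (Finset.Iic ⌊x⌋₊).filter Nat.Prime,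
            ‖a p‖ ^ 2 / (p : ℝ)) ^ k :=
  character_moment_prime_sums_general q x k hxk t a
end

section
/- There is an absolute constant C such that for every real number a with 0 < |a| ≤ 1/100 and every z ≥ 3, ∑_{p ≤ z} cos(a · log p)/p ≤ log(min{1/|a|, log z}) + C, where the sum runs over primes p ≤ z. -/
/-!
Put `s = σ + i a` with `σ = 1 + 1 / log z`. Replacing `1 / p` by `p ^ (-σ)` costs at most
`(σ - 1) ∑_{p ≤ z} log p / p = O(1)`, and adding the primes `p > z` costs at most
`∑_{p > z} p ^ (-σ) = O(1)`; both follow from Chebyshev's bound `θ x ≤ x log 4` summed over the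
blocks `x / e ≤ p ≤ x`. What remains, `Re ∑_p p ^ (-s)`, is `log |ζ s| + O(1)` by the Euler
product, and `|ζ s| ≪ 1 / |s - 1| ≤ min (1 / |a|) (log z)` because `(s - 1) ζ s` is continuous.
-/

open Real

theorem exp_one_mul_log_four_le : exp 1 * log 4 ≤ 4 := by
  have h4 : log 4 = 2 * log 2 := by
    rw [show (4 : ℝ) = 2 ^ 2 by norm_num, Real.log_pow]; norm_num
  rw [h4]
  nlinarith [exp_one_lt_d9, log_two_lt_d9, log_two_gt_d9, exp_one_gt_d9]

theorem one_le_log_of_exp_one_le {z : ℝ} (hz : exp 1 ≤ z) : 1 ≤ log z := by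
  rw [← log_exp 1]; exact log_le_log (exp_pos 1) hz

theorem exp_floor_log_le {u : ℝ} (hu : 1 ≤ u) : exp ⌊log u⌋₊ ≤ u := by
  calc exp ⌊log u⌋₊ ≤ exp (log u) := exp_le_exp.2 (Nat.floor_le (log_nonneg hu))
    _ = u := exp_log (by linarith)

theorem lt_exp_floor_log_add_one {u : ℝ} (hu : 0 < u) : u < exp (⌊log u⌋₊ + 1) := by
  calc u = exp (log u) := (exp_log hu).symm
    _ < exp (⌊log u⌋₊ + 1) := exp_lt_exp.2 (Nat.lt_floor_add_one _)

theorem exp_neg_one_le_mul_one_sub_exp_neg_inv {L : ℝ} (hL : 1 ≤ L) :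
    exp (-1) ≤ L * (1 - exp (-L⁻¹)) := by
  have hL0 : 0 < L := by linarith
  have h1 : L⁻¹ * exp (-L⁻¹) ≤ 1 - exp (-L⁻¹) := by
    have h := mul_le_mul_of_nonneg_right (add_one_le_exp L⁻¹) (exp_pos (-L⁻¹)).le
    rw [← exp_add, add_neg_cancel, exp_zero] at h
    linarith
  have h2 : exp (-1) ≤ exp (-L⁻¹) := exp_le_exp.2 (neg_le_neg (inv_le_one_of_one_le₀ hL))
  calc exp (-1) ≤ L * (L⁻¹ * exp (-L⁻¹)) := by rw [mul_inv_cancel_left₀ hL0.ne']; exact h2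
    _ ≤ L * (1 - exp (-L⁻¹)) := mul_le_mul_of_nonneg_left h1 hL0.le

theorem cos_log_div_le_rpow_mul_add {x : ℝ} (hx : 1 ≤ x) {δ : ℝ} (hδ : 0 ≤ δ) (a : ℝ) :
    cos (a * log x) / x ≤ x ^ (-(1 + δ)) * cos (a * log x) + δ * (log x / x) := by
  have hx0 : 0 < x := by linarith
  have hsplit : x ^ (-(1 + δ)) = x⁻¹ * x ^ (-δ) := by
    rw [neg_add, rpow_add hx0, rpow_neg_one]
  have hδx : 1 - δ * log x ≤ x ^ (-δ) := by
    rw [rpow_def_of_pos hx0]; linarith [add_one_le_exp (log x * -δ)]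
  have hle1 : x ^ (-δ) ≤ 1 := rpow_le_one_of_one_le_of_nonpos hx (by linarith)
  have hgap : 0 ≤ x⁻¹ * (1 - x ^ (-δ)) := mul_nonneg (inv_nonneg.2 hx0.le) (by linarith)
  calc cos (a * log x) / x
        = x⁻¹ * x ^ (-δ) * cos (a * log x) + x⁻¹ * (1 - x ^ (-δ)) * cos (a * log x) := by ring
    _ ≤ x⁻¹ * x ^ (-δ) * cos (a * log x) + x⁻¹ * (δ * log x) := by
        have := mul_le_mul_of_nonneg_left (cos_le_one (a * log x)) hgap
        have := mul_le_mul_of_nonneg_left (by linarith : 1 - x ^ (-δ) ≤ δ * log x)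
          (inv_nonneg.2 hx0.le)
        linarith
    _ = _ := by rw [hsplit]; ring

theorem HasSum.sum_le_add_of_forall_disjoint {ι : Type*} {f : ι → ℝ} {S B : ℝ} (hf : HasSum f S)
    (F : Finset ι) (hB : ∀ G : Finset ι, Disjoint F G → -B ≤ ∑ i ∈ G, f i) :
    ∑ i ∈ F, f i ≤ S + B := by
  classical
  have : ∀ᶠ H in Filter.atTop, ∑ i ∈ F, f i - B ≤ ∑ i ∈ H, f i := by
    filter_upwards [Filter.eventually_ge_atTop F] with H hFH
    rw [← Finset.sum_sdiff hFH]
    linarith [hB (H \ F) Finset.disjoint_sdiff]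
  linarith [ge_of_tendsto hf this]

theorem sum_log_le_theta {x : ℝ} {S : Finset ℕ} (hS : ∀ p ∈ S, p.Prime ∧ (p : ℝ) ≤ x) :
    ∑ p ∈ S, log p ≤ Chebyshev.theta x := by
  rw [Chebyshev.theta_eq_sum_primesLE]
  refine Finset.sum_le_sum_of_subset_of_nonneg (fun p hp ↦ ?_) fun n _ _ ↦ log_natCast_nonneg n
  exact Nat.mem_primesLE.2 ⟨Nat.le_floor (hS p hp).2, (hS p hp).1⟩

theorem sum_log_div_le_four {x : ℝ} {S : Finset ℕ}
    (hS : ∀ p ∈ S, p.Prime ∧ x ≤ exp 1 * p ∧ (p : ℝ) ≤ x) : ∑ p ∈ S, log p / p ≤ 4 := by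
  rcases S.eq_empty_or_nonempty with rfl | ⟨q, hq⟩
  · simp
  have hx : 0 < x := (Nat.cast_pos.2 (hS q hq).1.pos).trans_le (hS q hq).2.2
  calc ∑ p ∈ S, log p / p ≤ ∑ p ∈ S, exp 1 / x * log p := by
        refine Finset.sum_le_sum fun p hp ↦ ?_
        have hp0 : (0 : ℝ) < p := Nat.cast_pos.2 (hS p hp).1.pos
        rw [div_eq_mul_inv, mul_comm]
        refine mul_le_mul_of_nonneg_right ?_ (log_natCast_nonneg _)
        rw [inv_le_iff_one_le_mul₀ hp0, div_mul_eq_mul_div, one_le_div hx]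
        exact (hS p hp).2.1
    _ = exp 1 / x * ∑ p ∈ S, log p := (Finset.mul_sum ..).symm
    _ ≤ exp 1 / x * (log 4 * x) := by
        gcongr
        exact (sum_log_le_theta fun p hp ↦ ⟨(hS p hp).1, (hS p hp).2.2⟩).trans
          (Chebyshev.theta_le_log4_mul_x hx.le)
    _ = exp 1 * log 4 := by field_simp
    _ ≤ 4 := exp_one_mul_log_four_le

theorem sum_log_div_le_four_mul_log_add_one {z : ℝ} (hz : 1 ≤ z) {S : Finset ℕ}
    (hS : ∀ p ∈ S, p.Prime ∧ (p : ℝ) ≤ z) : ∑ p ∈ S, log p / p ≤ 4 * (log z + 1) := by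
  have hz0 : 0 < z := by linarith
  have hpos : ∀ p ∈ S, (0 : ℝ) < p := fun p hp ↦ Nat.cast_pos.2 (hS p hp).1.pos
  have hge : ∀ p ∈ S, 1 ≤ z / p := fun p hp ↦ (one_le_div (hpos p hp)).2 (hS p hp).2
  -- the fibre `k p = j` consists of the primes with `e ^ j ≤ z / p < e ^ (j + 1)`
  set k : ℕ → ℕ := fun p ↦ ⌊log (z / p)⌋₊
  have hk : ∀ p ∈ S, k p ∈ Finset.range (⌊log z⌋₊ + 1) := fun p hp ↦
    Finset.mem_range_succ_iff.2 <| Nat.floor_le_floor <|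
      log_le_log (by linarith [hge p hp]) (div_le_self hz0.le (mod_cast (hS p hp).1.one_lt.le))
  have hblock : ∀ j, ∑ p ∈ S with k p = j, log p / p ≤ 4 := by
    intro j
    refine sum_log_div_le_four (x := z / exp j) fun p hp ↦ ?_
    obtain ⟨hpS, rfl⟩ := Finset.mem_filter.1 hp
    have hp0 := hpos p hpS
    have h1 := exp_floor_log_le (hge p hpS)
    have h2 := lt_exp_floor_log_add_one (div_pos hz0 hp0)
    rw [exp_add] at h2
    refine ⟨(hS p hpS).1, ?_, ?_⟩
    · rw [div_le_iff₀ (exp_pos _)]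
      rw [div_lt_iff₀ hp0] at h2
      nlinarith [exp_pos 1]
    · rw [le_div_iff₀ (exp_pos _)]
      rw [le_div_iff₀ hp0] at h1
      linarith
  calc ∑ p ∈ S, log p / p = ∑ j ∈ Finset.range (⌊log z⌋₊ + 1), ∑ p ∈ S with k p = j, log p / p :=
        (Finset.sum_fiberwise_of_maps_to hk _).symm
    _ ≤ ∑ j ∈ Finset.range (⌊log z⌋₊ + 1), (4 : ℝ) := Finset.sum_le_sum fun j _ ↦ hblock j
    _ ≤ 4 * (log z + 1) := by
        simp only [Finset.sum_const, Finset.card_range, nsmul_eq_mul]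
        push_cast
        linarith [Nat.floor_le (log_nonneg hz)]

theorem sum_rpow_neg_le_of_le_of_le_exp_one_mul {y δ : ℝ} (hy : 1 < y) (hδ : 0 ≤ δ)
    {S : Finset ℕ} (hS : ∀ p ∈ S, p.Prime ∧ y ≤ p ∧ (p : ℝ) ≤ exp 1 * y) :
    ∑ p ∈ S, (p : ℝ) ^ (-(1 + δ)) ≤ 4 * y ^ (-δ) / log y := by
  have hlogy : 0 < log y := log_pos hy
  calc ∑ p ∈ S, (p : ℝ) ^ (-(1 + δ)) ≤ ∑ p ∈ S, y ^ (-δ) / log y * (log p / p) := by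
        refine Finset.sum_le_sum fun p hp ↦ ?_
        have hyp := (hS p hp).2.1
        have hp0 : (0 : ℝ) < p := by linarith
        rw [neg_add, rpow_add hp0, rpow_neg_one]
        calc (p : ℝ)⁻¹ * p ^ (-δ) ≤ (p : ℝ)⁻¹ * y ^ (-δ) :=
              mul_le_mul_of_nonneg_left (rpow_le_rpow_of_nonpos (by linarith) hyp (by linarith))
                (by positivity)
          _ ≤ (p : ℝ)⁻¹ * y ^ (-δ) * (log p / log y) :=
              le_mul_of_one_le_right (by positivity)
                ((one_le_div hlogy).2 (log_le_log (by linarith) hyp))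
          _ = _ := by ring
    _ = y ^ (-δ) / log y * ∑ p ∈ S, log p / p := (Finset.mul_sum ..).symm
    _ ≤ y ^ (-δ) / log y * 4 := by
        gcongr
        exact sum_log_div_le_four fun p hp ↦
          ⟨(hS p hp).1, mul_le_mul_of_nonneg_left (hS p hp).2.1 (exp_pos 1).le, (hS p hp).2.2⟩
    _ = _ := by ring

theorem sum_rpow_neg_le_four_of_lt {z : ℝ} (hz : exp 1 ≤ z) {S : Finset ℕ}
    (hS : ∀ p ∈ S, p.Prime ∧ z < p) : ∑ p ∈ S, (p : ℝ) ^ (-(1 + (log z)⁻¹)) ≤ 4 := by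
  have hz0 : 0 < z := (exp_pos 1).trans_le hz
  set L := log z
  have hL : 1 ≤ L := one_le_log_of_exp_one_le hz
  have hL0 : 0 < L := by linarith
  set r := exp (-L⁻¹)
  have hr0 : 0 ≤ r := (exp_pos _).le
  have hr1 : r < 1 := exp_lt_one_iff.2 (neg_lt_zero.2 (inv_pos.2 hL0))
  -- the fibre `k p = j` consists of the primes with `e ^ j ≤ p / z < e ^ (j + 1)`
  set k : ℕ → ℕ := fun p ↦ ⌊log (p / z)⌋₊
  have hblock : ∀ j, ∑ p ∈ S with k p = j, (p : ℝ) ^ (-(1 + L⁻¹)) ≤ 4 * exp (-1) * r ^ j / L := by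
    intro j
    have hy : 1 < z * exp j :=
      one_lt_mul_of_lt_of_le ((one_lt_exp_iff.2 one_pos).trans_le hz) (one_le_exp j.cast_nonneg)
    refine (sum_rpow_neg_le_of_le_of_le_exp_one_mul hy (inv_nonneg.2 hL0.le) fun p hp ↦ ?_).trans ?_
    · obtain ⟨hpS, rfl⟩ := Finset.mem_filter.1 hp
      have hp0 : (0 : ℝ) < p := hz0.trans (hS p hpS).2
      have h1 := exp_floor_log_le ((one_le_div hz0).2 (hS p hpS).2.le)
      have h2 := (lt_exp_floor_log_add_one (div_pos hp0 hz0)).le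
      rw [le_div_iff₀ hz0] at h1
      rw [div_le_iff₀ hz0, exp_add] at h2
      exact ⟨(hS p hpS).1, by linarith, by linarith⟩
    · have hlog : log (z * exp j) = L + j := by rw [log_mul hz0.ne' (exp_pos _).ne', log_exp]
      have hpow : (z * exp j) ^ (-L⁻¹) = exp (-1) * r ^ j := by
        rw [rpow_def_of_pos (by positivity), hlog, ← exp_nat_mul, ← exp_add]
        congr 1
        field_simp
        ring
      rw [hlog, hpow, ← mul_assoc]
      exact div_le_div_of_nonneg_left (by positivity) hL0 (by linarith [j.cast_nonneg (α := ℝ)])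
  calc ∑ p ∈ S, (p : ℝ) ^ (-(1 + L⁻¹))
      = ∑ j ∈ S.image k, ∑ p ∈ S with k p = j, (p : ℝ) ^ (-(1 + L⁻¹)) :=
        (Finset.sum_fiberwise_of_maps_to (fun p hp ↦ Finset.mem_image_of_mem k hp) _).symm
    _ ≤ ∑ j ∈ S.image k, 4 * exp (-1) * r ^ j / L := Finset.sum_le_sum fun j _ ↦ hblock j
    _ = 4 * exp (-1) / L * ∑ j ∈ S.image k, r ^ j := by rw [Finset.mul_sum]; congr! 1; ring
    _ ≤ 4 * exp (-1) / L * (1 - r)⁻¹ := by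
        gcongr
        rw [← tsum_geometric_of_lt_one hr0 hr1]
        exact (summable_geometric_of_lt_one hr0 hr1).sum_le_tsum _ fun j _ ↦ pow_nonneg hr0 j
    _ = 4 * (exp (-1) / (L * (1 - r))) := by rw [← div_div]; ring
    _ ≤ 4 * 1 := by
        gcongr
        exact (div_le_one (by nlinarith)).2 (exp_neg_one_le_mul_one_sub_exp_neg_inv hL)
    _ = 4 := mul_one 4

theorem re_natCast_cpow_neg {n : ℕ} (hn : 0 < n) (σ a : ℝ) :
    ((n : ℂ) ^ (-((σ : ℂ) + a * Complex.I))).re = (n : ℝ) ^ (-σ) * cos (a * log n) := by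
  rw [Complex.cpow_def_of_ne_zero (by exact_mod_cast hn.ne'), ← Complex.natCast_log,
    Complex.exp_re, rpow_def_of_pos (by exact_mod_cast hn)]
  simp [Complex.log_re, Complex.log_im, mul_comm]

theorem summable_prime_cpow_neg {s : ℂ} (hs : 1 < s.re) :
    Summable fun p : Nat.Primes ↦ (p : ℂ) ^ (-s) := by
  refine .of_norm_bounded (Nat.Primes.summable_rpow.2 (by linarith : -s.re < -1)) fun p ↦ ?_
  rw [Complex.norm_natCast_cpow_of_pos p.prop.pos, Complex.neg_re]

theorem re_tsum_prime_cpow_neg_le {s : ℂ} (hs : 1 < s.re) :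
    (∑' p : Nat.Primes, (p : ℂ) ^ (-s)).re
      ≤ log ‖riemannZeta s‖ + ∑' p : Nat.Primes, ((p : ℝ) ^ 2)⁻¹ := by
  set g : Nat.Primes → ℂ := fun p ↦ (p : ℂ) ^ (-s)
  set r : Nat.Primes → ℂ := fun p ↦ Complex.log (1 + -g p) - -g p
  have hr : ∀ p, ‖r p‖ ≤ ((p : ℝ) ^ 2)⁻¹ := by
    intro p
    have hp : (2 : ℝ) ≤ p := mod_cast p.prop.two_le
    have h1 : ‖g p‖ ≤ (p : ℝ)⁻¹ := by
      rw [Complex.norm_natCast_cpow_of_pos p.prop.pos, Complex.neg_re, ← rpow_neg_one]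
      exact rpow_le_rpow_of_exponent_le (by linarith) (by linarith)
    have h2 : ‖g p‖ ≤ 1 / 2 := h1.trans (by rw [inv_le_comm₀ (by linarith) (by norm_num)]; linarith)
    calc ‖r p‖ ≤ ‖-g p‖ ^ 2 * (1 - ‖-g p‖)⁻¹ / 2 :=
          Complex.norm_log_one_add_sub_self_le (by rw [norm_neg]; linarith)
      _ ≤ ‖g p‖ ^ 2 := by
          rw [norm_neg, mul_div_assoc]
          refine mul_le_of_le_one_right (sq_nonneg _) ?_
          rw [div_le_one two_pos, inv_le_comm₀ (by linarith) two_pos]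
          linarith
      _ ≤ ((p : ℝ) ^ 2)⁻¹ := by
          rw [← inv_pow]; exact pow_le_pow_left₀ (norm_nonneg _) h1 2
  have hsum2 : Summable fun p : Nat.Primes ↦ ((p : ℝ) ^ 2)⁻¹ :=
    (Real.summable_nat_pow_inv.2 one_lt_two).comp_injective Nat.Primes.coe_nat_injective
  have hsplit : ∑' p, g p = (∑' p, -Complex.log (1 - g p)) + ∑' p, r p := by
    rw [← (summable_prime_cpow_neg hs).clog_one_sub.neg.tsum_add (.of_norm_bounded hsum2 hr)]
    refine tsum_congr fun p ↦ ?_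
    simp only [r, sub_eq_add_neg]
    ring
  have hlog : log ‖riemannZeta s‖ = (∑' p, -Complex.log (1 - g p)).re := by
    rw [← riemannZeta_eulerProduct_exp_log hs, Complex.norm_exp, log_exp]
  rw [hsplit, Complex.add_re, ← hlog]
  gcongr
  exact (Complex.re_le_norm _).trans (tsum_of_norm_bounded hsum2.hasSum hr)

theorem exists_norm_sub_one_mul_riemannZeta_le (R : ℝ) :
    ∃ M, ∀ s : ℂ, ‖s - 1‖ ≤ R → ‖(s - 1) * riemannZeta s‖ ≤ M := by
  classical
  set G := Function.update (fun s ↦ (s - 1) * riemannZeta s) 1 1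
  have hG : Continuous G := by
    refine continuous_iff_continuousAt.2 fun s ↦ ?_
    rcases eq_or_ne s 1 with rfl | hs
    · simpa only [G, continuousAt_update_same] using riemannZeta_residue_one
    · rw [continuousAt_update_of_ne hs]
      exact continuousAt_id.sub continuousAt_const |>.mul
        (differentiableAt_riemannZeta hs).continuousAt
  obtain ⟨M, hM⟩ := (isCompact_closedBall (1 : ℂ) R).exists_bound_of_continuousOn hG.continuousOn
  refine ⟨M, fun s hs ↦ ?_⟩
  rcases eq_or_ne s 1 with rfl | hs1
  · simpa using (norm_nonneg _).trans (hM 1 (Metric.mem_closedBall_self (by simpa using hs)))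
  · simpa [G, Function.update_of_ne hs1] using hM s (by simpa [dist_eq_norm] using hs)

theorem exists_log_norm_riemannZeta_le (R : ℝ) :
    ∃ C, ∀ s : ℂ, 1 < s.re → ‖s - 1‖ ≤ R → log ‖riemannZeta s‖ ≤ C + log ‖s - 1‖⁻¹ := by
  obtain ⟨M, hM⟩ := exists_norm_sub_one_mul_riemannZeta_le R
  refine ⟨log M, fun s hs hsR ↦ ?_⟩
  have hζ : riemannZeta s ≠ 0 := riemannZeta_ne_zero_of_one_lt_re hs
  have hs1 : s - 1 ≠ 0 := fun h ↦ by simp [sub_eq_zero.1 h] at hs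
  have h := log_le_log (norm_pos_iff.2 (mul_ne_zero hs1 hζ)) (hM s hsR)
  rw [norm_mul, log_mul (norm_ne_zero_iff.2 hs1) (norm_ne_zero_iff.2 hζ)] at h
  rw [log_inv]
  linarith

theorem inv_norm_mk_le_min {δ a : ℝ} (hδ : 0 < δ) (ha : a ≠ 0) :
    ‖(⟨δ, a⟩ : ℂ)‖⁻¹ ≤ min (1 / |a|) δ⁻¹ := by
  rw [one_div]
  refine le_min (inv_anti₀ (abs_pos.2 ha) ?_) (inv_anti₀ hδ ?_)
  · simpa using Complex.abs_im_le_norm (⟨δ, a⟩ : ℂ)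
  · simpa [abs_of_pos hδ] using Complex.abs_re_le_norm (⟨δ, a⟩ : ℂ)

theorem sum_cos_div_le_sum_rpow_mul_cos_add {z : ℝ} (hz : exp 1 ≤ z) (a : ℝ) :
    ∑ p ∈ Finset.Iic ⌊z⌋₊ with p.Prime, cos (a * log p) / p
      ≤ ∑ p ∈ Finset.Iic ⌊z⌋₊ with p.Prime, (p : ℝ) ^ (-(1 + (log z)⁻¹)) * cos (a * log p) + 8 := by
  have hL := one_le_log_of_exp_one_le hz
  have hP : ∀ p ∈ (Finset.Iic ⌊z⌋₊).filter Nat.Prime, p.Prime ∧ (p : ℝ) ≤ z := fun p hp ↦ by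
    obtain ⟨hp, hprime⟩ := Finset.mem_filter.1 hp
    exact ⟨hprime, (Nat.le_floor_iff ((exp_pos 1).le.trans hz)).1 (Finset.mem_Iic.1 hp)⟩
  calc _ ≤ ∑ p ∈ Finset.Iic ⌊z⌋₊ with p.Prime,
          ((p : ℝ) ^ (-(1 + (log z)⁻¹)) * cos (a * log p) + (log z)⁻¹ * (log p / p)) :=
        Finset.sum_le_sum fun p hp ↦
          cos_log_div_le_rpow_mul_add (mod_cast (hP p hp).1.one_lt.le)
            (inv_nonneg.2 (by linarith)) a
    _ = ∑ p ∈ Finset.Iic ⌊z⌋₊ with p.Prime, (p : ℝ) ^ (-(1 + (log z)⁻¹)) * cos (a * log p)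
          + (log z)⁻¹ * ∑ p ∈ Finset.Iic ⌊z⌋₊ with p.Prime, log p / p := by
        rw [Finset.sum_add_distrib, Finset.mul_sum]
    _ ≤ _ := by
        gcongr
        calc (log z)⁻¹ * ∑ p ∈ Finset.Iic ⌊z⌋₊ with p.Prime, log p / p
            ≤ (log z)⁻¹ * (4 * (log z + 1)) :=
              mul_le_mul_of_nonneg_left
                (sum_log_div_le_four_mul_log_add_one ((one_le_exp zero_le_one).trans hz) hP)
                (inv_nonneg.2 (by linarith))
          _ = 4 + 4 * (log z)⁻¹ := by field_simp
          _ ≤ 8 := by linarith [inv_le_one_of_one_le₀ hL]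

theorem sum_rpow_mul_cos_le_re_tsum {z : ℝ} (hz : exp 1 ≤ z) (a : ℝ) :
    ∑ p ∈ Finset.Iic ⌊z⌋₊ with p.Prime, (p : ℝ) ^ (-(1 + (log z)⁻¹)) * cos (a * log p)
      ≤ (∑' p : Nat.Primes, (p : ℂ) ^ (-(((1 + (log z)⁻¹ : ℝ) : ℂ) + a * Complex.I))).re + 4 := by
  set σ := 1 + (log z)⁻¹
  have hσ : 1 < σ := by
    have := one_le_log_of_exp_one_le hz
    simp only [σ, lt_add_iff_pos_right, inv_pos]; linarith
  -- the real parts of `p ^ (-s)`, extended by zero from `Nat.Primes` to `ℕ`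
  set u : ℕ → ℝ := fun n ↦ if n.Prime then (n : ℝ) ^ (-σ) * cos (a * log n) else 0
  have hu : HasSum u (∑' p : Nat.Primes, (p : ℂ) ^ (-((σ : ℂ) + a * Complex.I))).re := by
    refine (Nat.Primes.coe_nat_injective.hasSum_iff fun n hn ↦ ?_).1 ?_
    · exact if_neg fun hprime ↦ hn ⟨⟨n, hprime⟩, rfl⟩
    · have hcomp : u ∘ ((↑) : Nat.Primes → ℕ)
          = fun p : Nat.Primes ↦ ((p : ℂ) ^ (-((σ : ℂ) + a * Complex.I))).re := by
        funext p
        simp only [Function.comp_apply, u, if_pos p.prop]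
        exact (re_natCast_cpow_neg p.prop.pos σ a).symm
      rw [hcomp]
      exact Complex.hasSum_re (summable_prime_cpow_neg (by simpa using hσ)).hasSum
  rw [Finset.sum_congr rfl fun p hp ↦ (if_pos (Finset.mem_filter.1 hp).2).symm]
  refine hu.sum_le_add_of_forall_disjoint _ fun G hG ↦ ?_
  have htail := sum_rpow_neg_le_four_of_lt hz (S := G.filter Nat.Prime) fun p hp ↦ by
    obtain ⟨hpG, hprime⟩ := Finset.mem_filter.1 hp
    refine ⟨hprime, Nat.lt_of_floor_lt (not_le.1 fun hle ↦ ?_)⟩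
    exact Finset.disjoint_left.1 hG (Finset.mem_filter.2 ⟨Finset.mem_Iic.2 hle, hprime⟩) hpG
  calc -4 ≤ -∑ p ∈ G with p.Prime, (p : ℝ) ^ (-σ) := neg_le_neg htail
    _ = ∑ p ∈ G with p.Prime, -(p : ℝ) ^ (-σ) := (Finset.sum_neg_distrib ..).symm
    _ ≤ ∑ p ∈ G with p.Prime, (p : ℝ) ^ (-σ) * cos (a * log p) :=
        Finset.sum_le_sum fun p _ ↦ by
          nlinarith [neg_one_le_cos (a * log p), rpow_nonneg (Nat.cast_nonneg (α := ℝ) p) (-σ)]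
    _ = ∑ p ∈ G, u p := Finset.sum_filter ..

/-- **Lemma 2.8, first case.** There is an absolute constant `C` such that for every real
`a` with `0 < |a| ≤ 1/100` and every `z ≥ 3`,
`∑_{p ≤ z} cos(a log p)/p ≤ log(min{1/|a|, log z}) + C`. -/
theorem cos_sum_over_primes_small :
    ∃ C : ℝ, ∀ a : ℝ, 0 < |a| → |a| ≤ 1 / 100 → ∀ z : ℝ, 3 ≤ z →
      ∑ p ∈ (Finset.Iic ⌊z⌋₊).filter Nat.Prime,
          Real.cos (a * Real.log p) / (p : ℝ)
        ≤ Real.log (min (1 / |a|) (Real.log z)) + C := by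
  obtain ⟨C, hC⟩ := exists_log_norm_riemannZeta_le 2
  refine ⟨C + ∑' p : Nat.Primes, ((p : ℝ) ^ 2)⁻¹ + 12, fun a ha0 ha1 z hz3 ↦ ?_⟩
  have hz : exp 1 ≤ z := by linarith [exp_one_lt_d9]
  have hL := one_le_log_of_exp_one_le hz
  set s : ℂ := ((1 + (log z)⁻¹ : ℝ) : ℂ) + a * Complex.I
  have hs1 : 1 < s.re := by simpa [s] using zero_lt_one.trans_le hL
  have hs : s - 1 = ⟨(log z)⁻¹, a⟩ := Complex.ext (by simp [s]) (by simp [s])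
  have hs2 : ‖s - 1‖ ≤ 2 := by
    rw [hs]
    refine (Complex.norm_le_abs_re_add_abs_im _).trans ?_
    have hδ : |(log z)⁻¹| ≤ 1 := by
      rw [abs_inv, abs_of_pos (by linarith)]; exact inv_le_one_of_one_le₀ hL
    exact (add_le_add hδ ha1).trans (by norm_num)
  have hs0 : s - 1 ≠ 0 := by rw [hs]; exact fun h ↦ abs_pos.1 ha0 (congrArg Complex.im h)
  have hmin : log ‖s - 1‖⁻¹ ≤ log (min (1 / |a|) (log z)) := by
    have h := inv_norm_mk_le_min (inv_pos.2 (by linarith : 0 < log z)) (abs_pos.1 ha0)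
    rw [inv_inv, ← hs] at h
    exact log_le_log (inv_pos.2 (norm_pos_iff.2 hs0)) h
  linarith [sum_cos_div_le_sum_rpow_mul_cos_add hz a, sum_rpow_mul_cos_le_re_tsum hz a,
    re_tsum_prime_cpow_neg_le hs1, hC s hs1 hs2]
end
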